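/- Given a > 0 and fixed gains gᵢ > 0, the function Ψ(p) = ∑_{i=1}^{L} log₂(1 + gᵢpᵢ) - a·√(∑_{i=1}^{L}(1 - (1+gᵢpᵢ)^{-2})) is a difference of two functions that are each concave and componentwise increasing on ℝ₊^L; in particular, both ∑ᵢ log₂(1+gᵢpᵢ) and a·√(∑ᵢ(1-(1+gᵢpᵢ)^{-2})) are concave and increasing in p. -/

import Mathlib

/-!
Both functions are built from one-dimensional pieces by operations that preserve concavity
and monotonicity. On `t > 0` the maps `logb 2` and `t ↦ 1 - t⁻²` are concave and increasing,
and so remain after the substitution `t = 1 + gᵢ pᵢ` with `gᵢ ≥ 0`, which is affine and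
increasing. Concavity and monotonicity pass to a sum of such functions of separate coordinates,
and finally to `a √(·)` of a nonnegative concave function, because `√` is concave and increasing.
-/

open Real Set

section Composition

variable {f : ℝ → ℝ} {c : ℝ}

lemma ConcaveOn.comp_one_add_mul (hf : ConcaveOn ℝ (Ioi 0) f) (hc : 0 ≤ c) :
    ConcaveOn ℝ (Ici 0) fun x => f (1 + c * x) := by
  refine ⟨convex_Ici 0, fun x hx y hy a b ha hb hab => ?_⟩
  have hx' : (0 : ℝ) < 1 + c * x := by nlinarith [mem_Ici.1 hx]
  have hy' : (0 : ℝ) < 1 + c * y := by nlinarith [mem_Ici.1 hy]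
  convert hf.2 hx' hy' ha hb hab using 2
  simp only [smul_eq_mul]
  linear_combination -hab

lemma MonotoneOn.comp_one_add_mul (hf : MonotoneOn f (Ioi 0)) (hc : 0 ≤ c) :
    MonotoneOn (fun x => f (1 + c * x)) (Ici 0) := by
  intro x hx y hy hxy
  have hx' : (0 : ℝ) < 1 + c * x := by nlinarith [mem_Ici.1 hx]
  have hy' : (0 : ℝ) < 1 + c * y := by nlinarith [mem_Ici.1 hy]
  exact hf hx' hy' (by nlinarith [mul_le_mul_of_nonneg_left hxy hc])

end Composition

section Separable

variable {ι : Type*} [Fintype ι] {s : ι → Set ℝ} {φ : ι → ℝ → ℝ}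

lemma concaveOn_sum_comp_apply (h : ∀ i, ConcaveOn ℝ (s i) (φ i)) :
    ConcaveOn ℝ (univ.pi s) fun p : ι → ℝ => ∑ i, φ i (p i) := by
  refine ⟨convex_pi fun i _ => (h i).1, fun p hp q hq a b ha hb hab => ?_⟩
  simp only [smul_eq_mul, Finset.mul_sum, ← Finset.sum_add_distrib]
  exact Finset.sum_le_sum fun i _ => (h i).2 (hp i trivial) (hq i trivial) ha hb hab

lemma monotoneOn_sum_comp_apply (h : ∀ i, MonotoneOn (φ i) (s i)) :
    MonotoneOn (fun p : ι → ℝ => ∑ i, φ i (p i)) (univ.pi s) := fun _ hp _ hq hpq =>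
  Finset.sum_le_sum fun i _ => h i (hp i trivial) (hq i trivial) (hpq i)

end Separable

lemma ConcaveOn.sqrt {E : Type*} [AddCommMonoid E] [Module ℝ E] {s : Set E} {f : E → ℝ}
    (hf : ConcaveOn ℝ s f) (hf₀ : ∀ x ∈ s, 0 ≤ f x) : ConcaveOn ℝ s fun x => √(f x) :=
  ⟨hf.1, fun x hx y hy _ _ ha hb hab =>
    (strictConcaveOn_sqrt.concaveOn.2 (hf₀ x hx) (hf₀ y hy) ha hb hab).trans
      (sqrt_le_sqrt (hf.2 hx hy ha hb hab))⟩

lemma concaveOn_logb_Ioi {b : ℝ} (hb : 1 ≤ b) : ConcaveOn ℝ (Ioi 0) (logb b) := by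
  have h : logb b = fun x => (log b)⁻¹ • log x := by
    funext x
    simp only [logb, smul_eq_mul, div_eq_inv_mul]
  rw [h]
  exact strictConcaveOn_log_Ioi.concaveOn.smul (inv_nonneg.2 (log_nonneg hb))

lemma concaveOn_one_sub_inv_sq : ConcaveOn ℝ (Ioi 0) fun t : ℝ => 1 - (t ^ 2)⁻¹ := by
  have h : (fun t : ℝ => 1 - (t ^ 2)⁻¹) = (fun _ => 1) - fun t : ℝ => t ^ (-2 : ℤ) := by
    funext t
    simp only [Pi.sub_apply, zpow_neg, zpow_ofNat]
  rw [h]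
  exact (concaveOn_const 1 (convex_Ioi 0)).sub (convexOn_zpow (-2))

lemma monotoneOn_one_sub_inv_sq : MonotoneOn (fun t : ℝ => 1 - (t ^ 2)⁻¹) (Ioi 0) :=
  fun _ hs _ _ hst => sub_le_sub_left
    (inv_anti₀ (pow_pos hs 2) (pow_le_pow_left₀ (le_of_lt hs) hst 2)) 1

lemma one_sub_inv_sq_nonneg {t : ℝ} (ht : 1 ≤ t) : 0 ≤ 1 - (t ^ 2)⁻¹ :=
  sub_nonneg.2 (inv_le_one_of_one_le₀ (one_le_pow₀ ht))

/-- The finite-blocklength rate `Ψ = F - V` is a difference of two functions that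
are each concave and componentwise increasing on the nonnegative orthant:
both `F p = ∑ log₂(1 + gᵢ pᵢ)` and `V p = a √(∑ (1 - (1 + gᵢ pᵢ)⁻²))` are
concave and increasing in `p`. -/
theorem fbt_rate_dc_structure (L : ℕ) (a : ℝ) (ha : 0 < a)
    (g : Fin L → ℝ) (hg : ∀ i, 0 < g i) :
    ConcaveOn ℝ {p : Fin L → ℝ | ∀ i, 0 ≤ p i}
      (fun p : Fin L → ℝ => ∑ i, Real.logb 2 (1 + g i * p i)) ∧
    MonotoneOn (fun p : Fin L → ℝ => ∑ i, Real.logb 2 (1 + g i * p i))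
      {p : Fin L → ℝ | ∀ i, 0 ≤ p i} ∧
    ConcaveOn ℝ {p : Fin L → ℝ | ∀ i, 0 ≤ p i}
      (fun p : Fin L → ℝ => a * Real.sqrt (∑ i, (1 - ((1 + g i * p i) ^ 2)⁻¹))) ∧
    MonotoneOn (fun p : Fin L → ℝ =>
        a * Real.sqrt (∑ i, (1 - ((1 + g i * p i) ^ 2)⁻¹)))
      {p : Fin L → ℝ | ∀ i, 0 ≤ p i} := by
  have horthant : {p : Fin L → ℝ | ∀ i, 0 ≤ p i} = univ.pi fun _ => Ici 0 := by
    ext p; simp only [mem_ofPred_eq, mem_univ_pi, mem_Ici]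
  rw [horthant]
  have hS₀ : ∀ p ∈ univ.pi (fun _ : Fin L => Ici (0 : ℝ)),
      0 ≤ ∑ i, (1 - ((1 + g i * p i) ^ 2)⁻¹) := fun p hp =>
    Finset.sum_nonneg fun i _ => one_sub_inv_sq_nonneg <|
      le_add_of_nonneg_right (mul_nonneg (hg i).le (hp i trivial))
  have hS := concaveOn_sum_comp_apply fun i =>
    concaveOn_one_sub_inv_sq.comp_one_add_mul (hg i).le
  have hSmono := monotoneOn_sum_comp_apply fun i =>
    monotoneOn_one_sub_inv_sq.comp_one_add_mul (hg i).le
  refine ⟨concaveOn_sum_comp_apply fun i => (concaveOn_logb_Ioi one_le_two).comp_one_add_mul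
      (hg i).le,
    monotoneOn_sum_comp_apply fun i =>
      (strictMonoOn_logb one_lt_two).monotoneOn.comp_one_add_mul (hg i).le,
    by simpa only [smul_eq_mul] using (hS.sqrt hS₀).smul ha.le,
    (monotone_mul_left_of_nonneg ha.le).comp_monotoneOn (sqrt_monotone.comp_monotoneOn hSmono)⟩
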